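/- arXiv:1803.03981 — 2 statements merged into one kernel-verified Lean document; each statement's English description precedes it below -/
import Mathlib

section
/- Let a, b be real numbers and n a natural number. Then C_a(n) · C_b(n) = C_{ab + (1−a)(1−b)}(n). In particular, C_a(n) · C_a(n) = C_{a² + (1−a)²}(n). -/
/-- `Cmat a b n` is the `2^n × 2^n` real matrix indexed by bit strings `x, y ∈ {0,1}^n`
whose `(x, y)` entry is `a ^ (n - d) * b ^ d`, where `d` is the Hamming distance
between `x` and `y`. -/
def Cmat (a b : ℝ) (n : ℕ) : Matrix (Fin n → Fin 2) (Fin n → Fin 2) ℝ :=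
  Matrix.of fun x y => a ^ (n - hammingDist x y) * b ^ hammingDist x y

/-- `CmatB a n` abbreviates `Cmat a (1 - a) n`. -/
def CmatB (a : ℝ) (n : ℕ) : Matrix (Fin n → Fin 2) (Fin n → Fin 2) ℝ :=
  Cmat a (1 - a) n

lemma Cmat_eq_prod (a b : ℝ) (n : ℕ) (x y : Fin n → Fin 2) :
    Cmat a b n x y = ∏ i, if x i = y i then a else b := by
  classical
  rw [Finset.prod_ite, Finset.prod_const, Finset.prod_const]
  have hd : hammingDist x y = (Finset.univ.filter fun i => ¬ x i = y i).card := rfl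
  have hle : hammingDist x y ≤ n := (hammingDist_le_card_fintype).trans (by simp)
  have hsum := Finset.card_filter_add_card_filter_not
    (s := (Finset.univ : Finset (Fin n))) (p := fun i => x i = y i)
  simp only [Finset.card_univ, Fintype.card_fin] at hsum
  have h1 : (Finset.univ.filter fun i => x i = y i).card = n - hammingDist x y := by
    omega
  rw [h1, ← hd, Cmat]
  rfl

lemma key (a b : ℝ) (u w : Fin 2) :
    (∑ v : Fin 2, (if u = v then a else 1 - a) * (if v = w then b else 1 - b)) =
      if u = w then a * b + (1 - a) * (1 - b) else 1 - (a * b + (1 - a) * (1 - b)) := by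
  rw [Fin.sum_univ_two]
  fin_cases u <;> fin_cases w <;> simp <;> ring

theorem CmatB_mul (a b : ℝ) (n : ℕ) :
    (CmatB a n * CmatB b n = CmatB (a * b + (1 - a) * (1 - b)) n) ∧
      CmatB a n * CmatB a n = CmatB (a ^ 2 + (1 - a) ^ 2) n := by
  classical
  have main : ∀ a b : ℝ, CmatB a n * CmatB b n = CmatB (a * b + (1 - a) * (1 - b)) n := by
    intro a b
    ext x y
    rw [Matrix.mul_apply]
    simp only [CmatB, Cmat_eq_prod]
    calc ∑ z : Fin n → Fin 2, (∏ i, if x i = z i then a else 1 - a) *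
            (∏ i, if z i = y i then b else 1 - b)
        = ∑ z : Fin n → Fin 2, ∏ i,
            (if x i = z i then a else 1 - a) * (if z i = y i then b else 1 - b) := by
          exact Finset.sum_congr rfl fun z _ => Finset.prod_mul_distrib.symm
      _ = ∏ i, ∑ v : Fin 2, (if x i = v then a else 1 - a) * (if v = y i then b else 1 - b) := by
          rw [Fintype.prod_sum]
      _ = ∏ i, if x i = y i then a * b + (1 - a) * (1 - b)
            else 1 - (a * b + (1 - a) * (1 - b)) := by
          exact Finset.prod_congr rfl fun i _ => key a b (x i) (y i)
  refine ⟨main a b, ?_⟩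
  have := main a a
  convert this using 3 <;> ring
end

section
/- Let a be a real number with a ≠ 1/2, let n be a natural number, let π be a probability vector on {0,1}^n, and write C = C_a(n). Then Tr( C⁻¹ · diag(Cπ) · (C⁻¹)ᵀ − π πᵀ ) = ((a² + (1−a)²)/(2a−1)²)^n − πᵀπ, where πᵀπ = Σ_x π_x². -/
/-!
Coordinatewise, `Cmat a b n` is the `n`-fold Kronecker power of `[[a, b], [b, a]]`, so these
matrices multiply like `a + b ε` with `ε² = 1`: the inverse of `Cmat a b n` is
`Cmat (a / (a² - b²)) (-b / (a² - b²)) n`, and its column sums are `(a + b) ^ n`.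
Since `tr (M diag(v) Mᵀ) = Σ_y (Σ_x M_xy²) v_y` and the entrywise square of a `Cmat` is again a
`Cmat`, the trace equals `(e² + f²) ^ n Σ_y v_y` for the parameters `e, f` of the inverse, and
`v = Cmat a (1 - a) n π` has total mass `1` because that matrix is column-stochastic.
-/

open Matrix

section Cmat

variable (a b c d : ℝ) (n : ℕ)

theorem Cmat_apply_eq_prod (x y : Fin n → Fin 2) :
    Cmat a b n x y = ∏ i, if x i = y i then a else b := by
  have hsplit : (Finset.univ.filter fun i => x i = y i).card + hammingDist x y = n := by
    simpa [hammingDist] using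
      Finset.card_filter_add_card_filter_not (s := Finset.univ) fun i => x i = y i
  rw [Finset.prod_ite, Finset.prod_const, Finset.prod_const, Cmat, of_apply,
    Nat.sub_eq_of_eq_add hsplit.symm]
  rfl

theorem Cmat_mul_Cmat : Cmat a b n * Cmat c d n = Cmat (a * c + b * d) (a * d + b * c) n := by
  ext x z
  simp only [mul_apply, Cmat_apply_eq_prod, ← Finset.prod_mul_distrib]
  rw [← Fintype.prod_sum fun i (u : Fin 2) => (if x i = u then a else b) * if u = z i then c else d]
  refine Finset.prod_congr rfl fun i _ => ?_
  rw [Fin.sum_univ_two]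
  generalize x i = u, z i = w
  fin_cases u <;> fin_cases w <;> simp <;> ring

theorem Cmat_one_zero : Cmat 1 0 n = 1 := by
  ext x y
  simp [Cmat_apply_eq_prod, one_apply, Finset.prod_boole, funext_iff]

theorem inv_Cmat (h : a ^ 2 ≠ b ^ 2) :
    (Cmat a b n)⁻¹ = Cmat (a / (a ^ 2 - b ^ 2)) (-b / (a ^ 2 - b ^ 2)) n := by
  have h' : a ^ 2 - b ^ 2 ≠ 0 := sub_ne_zero.2 h
  refine inv_eq_right_inv ?_
  rw [Cmat_mul_Cmat, ← Cmat_one_zero n]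
  congr 1 <;> field_simp <;> ring

theorem transpose_Cmat : (Cmat a b n)ᵀ = Cmat a b n := by
  ext x y
  simp [Cmat, hammingDist_comm x y]

theorem Cmat_hadamard_Cmat : Cmat a b n ⊙ Cmat c d n = Cmat (a * c) (b * d) n := by
  ext x y
  simp only [hadamard_apply, Cmat, of_apply, mul_pow]
  ring

theorem one_vecMul_Cmat : 1 ᵥ* Cmat a b n = (a + b) ^ n • 1 := by
  ext y
  simp only [vecMul, dotProduct, one_mul, Pi.one_apply, Pi.smul_apply, smul_eq_mul, mul_one,
    Cmat_apply_eq_prod]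
  rw [← Fintype.prod_sum fun i (u : Fin 2) => if u = y i then a else b, ← Fin.prod_const]
  refine Finset.prod_congr rfl fun i _ => ?_
  rw [Fin.sum_univ_two]
  generalize y i = w
  fin_cases w <;> simp [add_comm]

end Cmat

theorem trace_mul_diagonal_mul_transpose {m k R : Type*} [Fintype m] [Fintype k] [DecidableEq k]
    [CommSemiring R] (M : Matrix m k R) (v : k → R) :
    trace (M * diagonal v * Mᵀ) = (1 ᵥ* (M ⊙ M)) ⬝ᵥ v := by
  simp only [mul_apply (M := M * diagonal v), mul_diagonal, trace, diag, transpose_apply, vecMul,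
    dotProduct, hadamard_apply, Pi.one_apply, one_mul, Finset.sum_mul]
  rw [Finset.sum_comm]
  exact Finset.sum_congr rfl fun _ _ => Finset.sum_congr rfl fun _ _ => by ring

theorem trace_cov_estimator_general (a : ℝ) (ha : a ≠ 1 / 2) (n : ℕ)
    (π : (Fin n → Fin 2) → ℝ) (hsum : ∑ x, π x = 1) :
    Matrix.trace
        ((CmatB a n)⁻¹ * Matrix.diagonal ((CmatB a n).mulVec π) * ((CmatB a n)⁻¹)ᵀ
          - Matrix.vecMulVec π π)
      = ((a ^ 2 + (1 - a) ^ 2) / (2 * a - 1) ^ 2) ^ n - ∑ x, π x ^ 2 := by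
  have hdet : a ^ 2 - (1 - a) ^ 2 = 2 * a - 1 := by ring
  have hdet0 : 2 * a - 1 ≠ 0 := fun h => ha (by linarith)
  have hinv : (CmatB a n)⁻¹ = Cmat (a / (2 * a - 1)) (-(1 - a) / (2 * a - 1)) n := by
    rw [CmatB, inv_Cmat _ _ _ (sub_ne_zero.1 (hdet ▸ hdet0)), hdet]
  have hmass : 1 ⬝ᵥ π = 1 := by rwa [one_dotProduct]
  rw [trace_sub, trace_vecMulVec, hinv, trace_mul_diagonal_mul_transpose, Cmat_hadamard_Cmat,
    one_vecMul_Cmat, smul_dotProduct, dotProduct_mulVec, CmatB, one_vecMul_Cmat,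
    add_sub_cancel, one_pow, one_smul, hmass]
  simp only [dotProduct, sq, smul_eq_mul]
  field_simp

theorem trace_cov_estimator (a : ℝ) (ha : a ≠ 1 / 2) (n : ℕ)
    (π : (Fin n → Fin 2) → ℝ) (hπ : ∀ x, 0 ≤ π x) (hsum : ∑ x, π x = 1) :
    Matrix.trace
        ((CmatB a n)⁻¹ * Matrix.diagonal ((CmatB a n).mulVec π) * ((CmatB a n)⁻¹)ᵀ
          - Matrix.vecMulVec π π)
      = ((a ^ 2 + (1 - a) ^ 2) / (2 * a - 1) ^ 2) ^ n - ∑ x, π x ^ 2 :=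
  trace_cov_estimator_general a ha n π hsum
end
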